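/- The infimum of the expected cross-entropy risk over all predictors equals the conditional entropy: ⨅ over all f : 𝒳 → ℝ with 0 < f(x) < 1 for every x ∈ 𝒳 of R(f) = H(Y|X). -/

import Mathlib

open Finset

/-- Joint probability `p_{X,Y}(x,y) = ∑_{ω : X ω = x ∧ Y ω = y} P ω`. -/
noncomputable def pJoint {Ω 𝒳 : Type*} [Fintype Ω] [DecidableEq 𝒳]
    (P : Ω → ℝ) (X : Ω → 𝒳) (Y : Ω → Bool) (x : 𝒳) (y : Bool) : ℝ :=
  ∑ ω ∈ Finset.univ.filter (fun ω => X ω = x ∧ Y ω = y), P ω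

/-- Marginal probability `p_X(x) = ∑_{ω : X ω = x} P ω`. -/
noncomputable def pMarg {Ω 𝒳 : Type*} [Fintype Ω] [DecidableEq 𝒳]
    (P : Ω → ℝ) (X : Ω → 𝒳) (x : 𝒳) : ℝ :=
  ∑ ω ∈ Finset.univ.filter (fun ω => X ω = x), P ω

/-- Conditional entropy `H(Y|X)`; terms with `p_{X,Y}(x,y) = 0` vanish since `0 · log _ = 0`. -/
noncomputable def condEnt {Ω 𝒳 : Type*} [Fintype Ω] [Fintype 𝒳] [DecidableEq 𝒳]
    (P : Ω → ℝ) (X : Ω → 𝒳) (Y : Ω → Bool) : ℝ :=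
  -∑ x : 𝒳, ∑ y : Bool, pJoint P X Y x y * Real.log (pJoint P X Y x y / pMarg P X x)

/-- Binary cross-entropy loss. -/
noncomputable def ceLoss (q : ℝ) (y : Bool) : ℝ :=
  if y then -Real.log q else -Real.log (1 - q)

/-- Expected cross-entropy risk of predictor `f`. -/
noncomputable def risk {Ω 𝒳 : Type*} [Fintype Ω]
    (P : Ω → ℝ) (X : Ω → 𝒳) (Y : Ω → Bool) (f : 𝒳 → ℝ) : ℝ :=
  ∑ ω, P ω * ceLoss (f (X ω)) (Y ω)

/-!
On a fibre `{X = x}` carrying mass `a` of label `true` and `b` of label `false`, a prediction `q`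
costs `-a log q - b log (1 - q)`. By Gibbs' inequality (`log t ≤ t - 1`) this is at least the
fibre's share `-a log (a / (a + b)) - b log (b / (a + b))` of `H(Y|X)`, with equality at
`q = a / (a + b)`; when `a` or `b` vanishes that optimum is an endpoint of `(0, 1)`, so the bound
is only approached. The fibres are optimised independently, so the infimum of the sum of the
fibre costs is the sum of their infima.
-/

open Real

theorem sub_le_mul_log_div {u v : ℝ} (hu : 0 ≤ u) (hv : 0 < v) : u - v ≤ u * log (u / v) := by
  have h := mul_le_mul_of_nonneg_left (self_sub_one_le_mul_log (div_nonneg hu hv.le)) hv.le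
  calc u - v = v * (u / v - 1) := by field_simp
    _ ≤ v * (u / v * log (u / v)) := h
    _ = u * log (u / v) := by field_simp

/-- The cross-entropy risk of predicting `q` when label `true` has mass `a` and `false` mass `b`. -/
noncomputable def weightedCE (a b q : ℝ) : ℝ := a * ceLoss q true + b * ceLoss q false

noncomputable def weightedEntropy (a b : ℝ) : ℝ :=
  -(a * log (a / (a + b)) + b * log (b / (a + b)))

lemma weightedCE_swap (a b q : ℝ) : weightedCE b a (1 - q) = weightedCE a b q := by
  simp [weightedCE, ceLoss, add_comm]

lemma weightedEntropy_swap (a b : ℝ) : weightedEntropy b a = weightedEntropy a b := by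
  simp only [weightedEntropy, add_comm]

lemma weightedEntropy_zero_left (b : ℝ) : weightedEntropy 0 b = 0 := by
  rcases eq_or_ne b 0 with rfl | hb
  · simp [weightedEntropy]
  · simp [weightedEntropy, hb]

lemma weightedEntropy_le_weightedCE {a b q : ℝ} (ha : 0 ≤ a) (hb : 0 ≤ b)
    (hq : q ∈ Set.Ioo 0 1) : weightedEntropy a b ≤ weightedCE a b q := by
  obtain ⟨hq0, hq1⟩ := hq
  rcases (add_nonneg ha hb).eq_or_lt with hm | hm
  · obtain ⟨rfl, rfl⟩ : a = 0 ∧ b = 0 := ⟨by linarith, by linarith⟩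
    simp [weightedEntropy, weightedCE]
  have log_split : ∀ {c r : ℝ}, 0 ≤ c → 0 < r →
      c * log (c / ((a + b) * r)) = c * log (c / (a + b)) - c * log r := by
    intro c r hc hr
    rcases hc.eq_or_lt with rfl | hc
    · simp
    · rw [← div_div, log_div (by positivity) hr.ne', mul_sub]
  -- The left-hand sides `a - (a + b) q` and `b - (a + b) (1 - q)` add up to `0`.
  have htrue := sub_le_mul_log_div ha (mul_pos hm hq0)
  have hfalse := sub_le_mul_log_div hb (mul_pos hm (sub_pos.2 hq1))
  rw [log_split ha hq0] at htrue
  rw [log_split hb (sub_pos.2 hq1)] at hfalse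
  simp only [weightedEntropy, weightedCE, ceLoss, if_true, Bool.false_eq_true, if_false]
  linarith

lemma weightedCE_div_add {a b : ℝ} (ha : 0 < a) (hb : 0 < b) :
    weightedCE a b (a / (a + b)) = weightedEntropy a b := by
  have : 1 - a / (a + b) = b / (a + b) := by field_simp; ring
  simp only [weightedEntropy, weightedCE, ceLoss, if_true, Bool.false_eq_true, if_false, this]
  ring

lemma exists_weightedCE_zero_left_lt {b δ : ℝ} (hb : 0 ≤ b) (hδ : 0 < δ) :
    ∃ q ∈ Set.Ioo (0 : ℝ) 1, weightedCE 0 b q < δ := by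
  set t := δ / (b + 1)
  have ht : 0 < t := by positivity
  -- `q = 1 - exp (-t)` makes `-log (1 - q) = t`.
  refine ⟨1 - exp (-t), ⟨by simp [ht], by simp [exp_pos]⟩, ?_⟩
  have : b * t < δ := by
    rw [mul_div_assoc', div_lt_iff₀ (by positivity)]; nlinarith
  simpa [weightedCE, ceLoss] using this

lemma exists_weightedCE_lt {a b δ : ℝ} (ha : 0 ≤ a) (hb : 0 ≤ b) (hδ : 0 < δ) :
    ∃ q ∈ Set.Ioo (0 : ℝ) 1, weightedCE a b q < weightedEntropy a b + δ := by
  rcases ha.eq_or_lt with rfl | ha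
  · simpa [weightedEntropy_zero_left] using exists_weightedCE_zero_left_lt hb hδ
  rcases hb.eq_or_lt with rfl | hb
  · obtain ⟨q, ⟨hq0, hq1⟩, hq⟩ := exists_weightedCE_zero_left_lt ha.le hδ
    refine ⟨1 - q, ⟨by linarith, by linarith⟩, ?_⟩
    rwa [← weightedCE_swap, sub_sub_cancel, weightedEntropy_swap, weightedEntropy_zero_left,
      zero_add]
  · refine ⟨a / (a + b), ⟨by positivity, (div_lt_one (by positivity)).2 (by linarith)⟩, ?_⟩
    rw [weightedCE_div_add ha hb]
    linarith

lemma isGLB_weightedCE {a b : ℝ} (ha : 0 ≤ a) (hb : 0 ≤ b) :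
    IsGLB (weightedCE a b '' Set.Ioo 0 1) (weightedEntropy a b) := by
  refine ⟨?_, fun c hc => le_of_forall_pos_lt_add fun δ hδ => ?_⟩
  · rintro _ ⟨q, hq, rfl⟩
    exact weightedEntropy_le_weightedCE ha hb hq
  · obtain ⟨q, hq, hlt⟩ := exists_weightedCE_lt ha hb hδ
    exact (hc ⟨q, hq, rfl⟩).trans_lt hlt

theorem isGLB_sum_pi {ι β : Type*} [Fintype ι] {S : Set β} {φ : ι → β → ℝ}
    {h : ι → ℝ} (hφ : ∀ i, IsGLB (φ i '' S) (h i)) :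
    IsGLB (Set.range fun f : {f : ι → β // ∀ i, f i ∈ S} => ∑ i, φ i (f.1 i))
      (∑ i, h i) := by
  refine ⟨?_, fun c hc => le_of_forall_pos_le_add fun δ hδ => ?_⟩
  · rintro _ ⟨⟨f, hf⟩, rfl⟩
    exact sum_le_sum fun i _ => (hφ i).1 ⟨f i, hf i, rfl⟩
  set n : ℝ := (Fintype.card ι : ℝ)
  have hδ' : 0 < δ / (n + 1) := by positivity
  choose g hg hgδ using fun i => (hφ i).exists_between (lt_add_of_pos_right (h i) hδ')
  choose q hq hqg using hg
  calc c ≤ ∑ i, φ i (q i) := hc ⟨⟨q, hq⟩, rfl⟩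
    _ ≤ ∑ i, (h i + δ / (n + 1)) := sum_le_sum fun i _ => (hqg i).symm ▸ (hgδ i).2.le
    _ = ∑ i, h i + n * (δ / (n + 1)) := by simp [sum_add_distrib, n]
    _ ≤ ∑ i, h i + δ := by
      gcongr
      rw [mul_div_assoc', div_le_iff₀ (by positivity)]
      nlinarith

lemma pJoint_nonneg {Ω 𝒳 : Type*} [Fintype Ω] [DecidableEq 𝒳] {P : Ω → ℝ}
    (hP : ∀ ω, 0 ≤ P ω) (X : Ω → 𝒳) (Y : Ω → Bool) (x : 𝒳) (y : Bool) : 0 ≤ pJoint P X Y x y :=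
  sum_nonneg fun ω _ => hP ω

section Decomposition

variable {Ω 𝒳 : Type*} [Fintype Ω] [DecidableEq 𝒳] (P : Ω → ℝ) (X : Ω → 𝒳) (Y : Ω → Bool)

lemma pMarg_eq_add (x : 𝒳) : pMarg P X x = pJoint P X Y x true + pJoint P X Y x false := by
  rw [pMarg, ← sum_fiberwise (univ.filter (X · = x)) Y P, Fintype.sum_bool]
  simp only [pJoint, filter_filter]

variable [Fintype 𝒳]

lemma sum_pJoint_mul (g : 𝒳 → Bool → ℝ) :
    ∑ x, ∑ y, pJoint P X Y x y * g x y = ∑ ω, P ω * g (X ω) (Y ω) := by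
  rw [← sum_fiberwise univ (fun ω => (X ω, Y ω)), ← Fintype.sum_prod_type']
  refine sum_congr rfl fun ⟨x, y⟩ _ => ?_
  rw [pJoint, sum_mul]
  refine sum_congr (by ext; simp) fun ω hω => ?_
  obtain ⟨rfl, rfl⟩ := (mem_filter.1 hω).2
  rfl

lemma risk_eq_sum (f : 𝒳 → ℝ) :
    risk P X Y f = ∑ x, weightedCE (pJoint P X Y x true) (pJoint P X Y x false) (f x) := by
  simp only [risk, weightedCE, ← sum_pJoint_mul P X Y fun x y => ceLoss (f x) y,
    Fintype.sum_bool]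

lemma condEnt_eq_sum :
    condEnt P X Y = ∑ x, weightedEntropy (pJoint P X Y x true) (pJoint P X Y x false) := by
  simp only [condEnt, weightedEntropy, pMarg_eq_add P X Y, Fintype.sum_bool, sum_neg_distrib]

end Decomposition

theorem iInf_risk_eq_condEnt_general {Ω 𝒳 : Type*} [Fintype Ω]
    [Fintype 𝒳] [DecidableEq 𝒳]
    (P : Ω → ℝ) (hP0 : ∀ ω, 0 ≤ P ω)
    (X : Ω → 𝒳) (Y : Ω → Bool) :
    ⨅ f : {f : 𝒳 → ℝ // ∀ x, 0 < f x ∧ f x < 1}, risk P X Y f.1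
      = condEnt P X Y := by
  have hGLB := isGLB_sum_pi fun x =>
    isGLB_weightedCE (pJoint_nonneg hP0 X Y x true) (pJoint_nonneg hP0 X Y x false)
  have : Nonempty {f : 𝒳 → ℝ // ∀ x, f x ∈ Set.Ioo 0 1} :=
    Set.range_nonempty_iff_nonempty.1 hGLB.nonempty
  simp only [risk_eq_sum, condEnt_eq_sum]
  exact hGLB.ciInf_eq

/-- the infimum of the expected cross-entropy risk over all
predictors `f` with `0 < f x < 1` equals the conditional entropy `H(Y|X)`. -/
theorem iInf_risk_eq_condEnt {Ω 𝒳 : Type*} [Fintype Ω] [Nonempty Ω]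
    [Fintype 𝒳] [DecidableEq 𝒳]
    (P : Ω → ℝ) (hP0 : ∀ ω, 0 ≤ P ω) (hP1 : ∑ ω, P ω = 1)
    (X : Ω → 𝒳) (Y : Ω → Bool) :
    ⨅ f : {f : 𝒳 → ℝ // ∀ x, 0 < f x ∧ f x < 1}, risk P X Y f.1
      = condEnt P X Y :=
  iInf_risk_eq_condEnt_general P hP0 X Y
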